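/- Let ν be a nonnegative Radon measure on ℝ^N \ {0} with ν(ℝ^N \ B_δ) < ∞ for all δ > 0 and ν{ z ∈ B : r|z·e| ≤ |z-(z·e)e|² } < ∞ for all r > 0 and unit vectors e. Let u be C^{1,1} at x with Du(x) ≠ 0 and |u(x+z) - u(x) - Du(x)·z| ≤ C|z|². Then the quantity κ₋*[x,u] = ν{ z : u(x+z) ≤ u(x), Du(x)·z ≥ 0 } is finite. -/

import Mathlib

open MeasureTheory Metric
open scoped RealInnerProductSpace

/-!
Write `e = p / ‖p‖` and split `z = t e + w` with `w ⟂ e`. On the set in question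
`0 ≤ ‖p‖ t = ⟪p, z⟫ ≤ C ‖z‖² = C t² + C ‖w‖²`, and for `‖z‖ ≤ r := ‖p‖ / (2C)` the term `C t²`
is at most half of `‖p‖ t`. Hence near the origin the set lies in the parabolic region
`r |t| ≤ ‖w‖²`, and away from the origin `ν` is finite anyway.
-/

variable {E : Type*} [NormedAddCommGroup E] [InnerProductSpace ℝ E]

def parabolicRegion (r : ℝ) (e : E) : Set E :=
  {z ∈ ball (0 : E) 1 | r * |⟪z, e⟫| ≤ ‖z - ⟪z, e⟫ • e‖ ^ 2}

lemma norm_sub_inner_smul_sq {e : E} (he : ‖e‖ = 1) (z : E) :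
    ‖z - ⟪z, e⟫ • e‖ ^ 2 = ‖z‖ ^ 2 - ⟪z, e⟫ ^ 2 := by
  rw [norm_sub_sq_real, real_inner_smul_right, norm_smul, he, Real.norm_eq_abs]
  ring_nf
  rw [sq_abs]
  ring

lemma mul_inner_le_norm_sub_inner_smul_sq {e z : E} (he : ‖e‖ = 1) {r C : ℝ} (hC : 0 < C)
    (hz : ‖z‖ ≤ r) (ht : 0 ≤ ⟪z, e⟫) (hle : 2 * C * r * ⟪z, e⟫ ≤ C * ‖z‖ ^ 2) :
    r * ⟪z, e⟫ ≤ ‖z - ⟪z, e⟫ • e‖ ^ 2 := by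
  set t := ⟪z, e⟫
  have htz : t ≤ ‖z‖ := by simpa [he] using real_inner_le_norm z e
  have hsq : C * t ^ 2 ≤ C * r * t := by
    have : t * t ≤ r * t := mul_le_mul_of_nonneg_right (htz.trans hz) ht
    nlinarith
  rw [norm_sub_inner_smul_sq he]
  nlinarith

lemma sublevel_inter_halfspace_subset {u : E → ℝ} {x p : E} (hp : p ≠ 0) {C : ℝ} (hC : 0 < C)
    (hlow : ∀ z, u x + ⟪p, z⟫ - C * ‖z‖ ^ 2 ≤ u (x + z)) :
    {z | u (x + z) ≤ u x ∧ 0 ≤ ⟪p, z⟫} ⊆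
      (ball 0 (min 1 (‖p‖ / (2 * C))))ᶜ ∪ parabolicRegion (‖p‖ / (2 * C)) (‖p‖⁻¹ • p) := by
  rintro z ⟨hsub, hhalf⟩
  by_cases hz : z ∈ ball (0 : E) (min 1 (‖p‖ / (2 * C)))
  · right
    rw [mem_ball_zero_iff, lt_min_iff] at hz
    have hinner : ⟪z, ‖p‖⁻¹ • p⟫ = ‖p‖⁻¹ * ⟪p, z⟫ := by
      rw [real_inner_smul_right, real_inner_comm]
    have ht : 0 ≤ ⟪z, ‖p‖⁻¹ • p⟫ := by rw [hinner]; positivity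
    have hle : 2 * C * (‖p‖ / (2 * C)) * ⟪z, ‖p‖⁻¹ • p⟫ ≤ C * ‖z‖ ^ 2 := by
      rw [hinner]
      field_simp
      linarith [hlow z]
    refine ⟨mem_ball_zero_iff.mpr hz.1, ?_⟩
    rw [abs_of_nonneg ht]
    exact mul_inner_le_norm_sub_inner_smul_sq (norm_smul_inv_norm hp) hC hz.2.le ht hle
  · exact Or.inl hz

theorem kappa_minus_finite_general (N : ℕ)
    (ν : Measure (EuclideanSpace ℝ (Fin N)))
    (hν1 : ∀ δ : ℝ, 0 < δ → ν (Metric.ball (0 : EuclideanSpace ℝ (Fin N)) δ)ᶜ < ⊤)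
    (hν2 : ∀ r : ℝ, 0 < r → ∀ e : EuclideanSpace ℝ (Fin N), ‖e‖ = 1 →
      ν {z ∈ Metric.ball (0 : EuclideanSpace ℝ (Fin N)) 1 |
          r * |⟪z, e⟫| ≤ ‖z - ⟪z, e⟫ • e‖ ^ 2} < ⊤)
    (u : EuclideanSpace ℝ (Fin N) → ℝ)
    (x p : EuclideanSpace ℝ (Fin N)) (hp : p ≠ 0)
    (C : ℝ) (hC : 0 < C)
    (hC11 : ∀ z, |u (x + z) - u x - ⟪p, z⟫| ≤ C * ‖z‖ ^ 2) :
    ν {z | u (x + z) ≤ u x ∧ 0 ≤ ⟪p, z⟫} < ⊤ := by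
  have hlow : ∀ z, u x + ⟪p, z⟫ - C * ‖z‖ ^ 2 ≤ u (x + z) := fun z => by
    linarith [(abs_le.mp (hC11 z)).1]
  have hr : 0 < ‖p‖ / (2 * C) := by positivity
  calc ν {z | u (x + z) ≤ u x ∧ 0 ≤ ⟪p, z⟫}
      ≤ ν ((ball 0 (min 1 (‖p‖ / (2 * C))))ᶜ ∪ parabolicRegion (‖p‖ / (2 * C)) (‖p‖⁻¹ • p)) :=
        measure_mono (sublevel_inter_halfspace_subset hp hC hlow)
    _ ≤ _ := measure_union_le _ _
    _ < ⊤ := ENNReal.add_lt_top.2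
        ⟨hν1 _ (lt_min one_pos hr), hν2 _ hr _ (norm_smul_inv_norm hp)⟩

/-- If the nonnegative Radon measure `ν` is finite away from the origin and finite on
parabolic regions, and `u` is `C^{1,1}` at `x` with nonzero gradient `p = Du(x)`, then
`κ₋*[x,u] = ν{ z : u(x+z) ≤ u(x), Du(x)·z ≥ 0 }` is finite. -/
theorem kappa_minus_finite (N : ℕ) (hN : 1 ≤ N)
    (ν : Measure (EuclideanSpace ℝ (Fin N)))
    (hν1 : ∀ δ : ℝ, 0 < δ → ν (Metric.ball (0 : EuclideanSpace ℝ (Fin N)) δ)ᶜ < ⊤)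
    (hν2 : ∀ r : ℝ, 0 < r → ∀ e : EuclideanSpace ℝ (Fin N), ‖e‖ = 1 →
      ν {z ∈ Metric.ball (0 : EuclideanSpace ℝ (Fin N)) 1 |
          r * |⟪z, e⟫| ≤ ‖z - ⟪z, e⟫ • e‖ ^ 2} < ⊤)
    (u : EuclideanSpace ℝ (Fin N) → ℝ)
    (x p : EuclideanSpace ℝ (Fin N)) (hgrad : HasGradientAt u p x) (hp : p ≠ 0)
    (C : ℝ) (hC : 0 < C)
    (hC11 : ∀ z, |u (x + z) - u x - ⟪p, z⟫| ≤ C * ‖z‖ ^ 2) :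
    ν {z | u (x + z) ≤ u x ∧ 0 ≤ ⟪p, z⟫} < ⊤ :=
  kappa_minus_finite_general N ν hν1 hν2 u x p hp C hC hC11
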